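/- Let N ≥ 1, let p ≥ 2 be an even integer, let c¹, …, c^{n_c} ∈ ℝ^N be control points, and let w ∈ ℝ^{n_c} satisfy ∑_{i=1}^{n_c} w_i > 0. Define D^mps(a) = ∑_{i=1}^{n_c} w_i ‖a − c^i‖^p log ‖a − c^i‖ (each term taken to be 0 when a = c^i), where ‖·‖ is the Euclidean norm. Then D^mps(a) → +∞ as ‖a‖ → +∞; that is, inf_{‖a‖ > R} D^mps(a) → +∞ as R → +∞. -/

import Mathlib

/-! Since `‖a - c‖ - ‖a‖` is bounded, `‖a - c‖ ~ ‖a‖` as `‖a‖ → ∞`, hence also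
`‖a - c‖ ^ p * log ‖a - c‖ ~ ‖a‖ ^ p * log ‖a‖`. The weighted sum is therefore equivalent to
`(∑ i, w i) * ‖a‖ ^ p * log ‖a‖`, which tends to `+∞` because the total weight is positive. -/

open Real Filter Asymptotics

lemma isEquivalent_norm_sub_const {E : Type*} [SeminormedAddCommGroup E] (c : E) :
    (fun a : E => ‖a - c‖) ~[comap norm atTop] fun a => ‖a‖ := by
  refine IsLittleO.isEquivalent ?_
  have hbounded : (fun a : E => ‖a - c‖ - ‖a‖) =O[comap norm atTop] fun _ => (1 : ℝ) :=
    isBigO_of_le' _ fun a => by simpa [abs_sub_comm] using abs_norm_sub_norm_le a (a - c)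
  refine hbounded.trans_isLittleO ((isLittleO_one_left_iff ℝ).mpr ?_)
  simpa only [norm_norm] using tendsto_comap

lemma isEquivalent_sum_mul {α ι 𝕜 : Type*} [NormedField 𝕜] {l : Filter α} (s : Finset ι)
    (w : ι → 𝕜) {f : ι → α → 𝕜} {g : α → 𝕜} (hf : ∀ i ∈ s, f i ~[l] g)
    (hw : ∑ i ∈ s, w i ≠ 0) :
    (fun x => ∑ i ∈ s, w i * f i x) ~[l] fun x => (∑ i ∈ s, w i) * g x := by
  refine IsLittleO.isEquivalent ?_
  have hsum : (fun x => ∑ i ∈ s, w i * (f i x - g x)) =o[l] g :=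
    IsLittleO.fun_sum fun i hi => (hf i hi).isLittleO.const_mul_left (w i)
  refine (hsum.const_mul_right' (isUnit_iff_ne_zero.mpr hw)).congr_left fun x => ?_
  simp only [Pi.sub_apply, mul_sub, Finset.sum_sub_distrib, Finset.sum_mul]

lemma tendsto_pow_mul_log_atTop (p : ℕ) :
    Tendsto (fun x : ℝ => x ^ p * log x) atTop atTop := by
  refine tendsto_atTop_mono' _ ?_ tendsto_log_atTop
  filter_upwards [eventually_ge_atTop 1] with x hx
  exact le_mul_of_one_le_left (log_nonneg hx) (one_le_pow₀ hx)

theorem stmt7_general (N : ℕ) (p : ℕ)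
    (nc : ℕ) (c : Fin nc → EuclideanSpace ℝ (Fin N)) (w : Fin nc → ℝ)
    (hw : 0 < ∑ i, w i) :
    Filter.Tendsto
      (fun a : EuclideanSpace ℝ (Fin N) =>
        ∑ i, w i * (‖a - c i‖ ^ p * Real.log ‖a - c i‖))
      (Filter.comap (fun a : EuclideanSpace ℝ (Fin N) => ‖a‖) Filter.atTop)
      Filter.atTop := by
  have hterm : ∀ i, (fun a : EuclideanSpace ℝ (Fin N) => ‖a - c i‖ ^ p * log ‖a - c i‖)
      ~[comap norm atTop] fun a => ‖a‖ ^ p * log ‖a‖ := fun i =>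
    ((isEquivalent_norm_sub_const (c i)).pow p).mul
      ((isEquivalent_norm_sub_const (c i)).log tendsto_comap)
  have hmain : Tendsto (fun a : EuclideanSpace ℝ (Fin N) => (∑ i, w i) * (‖a‖ ^ p * log ‖a‖))
      (comap norm atTop) atTop :=
    ((tendsto_pow_mul_log_atTop p).comp tendsto_comap).const_mul_atTop hw
  exact (isEquivalent_sum_mul _ w (fun i _ => hterm i) hw.ne').symm.tendsto_atTop hmain

theorem stmt7 (N : ℕ) (hN : 1 ≤ N) (p : ℕ) (heven : Even p) (hp2 : 2 ≤ p)
    (nc : ℕ) (c : Fin nc → EuclideanSpace ℝ (Fin N)) (w : Fin nc → ℝ)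
    (hw : 0 < ∑ i, w i) :
    Filter.Tendsto
      (fun a : EuclideanSpace ℝ (Fin N) =>
        ∑ i, w i * (‖a - c i‖ ^ p * Real.log ‖a - c i‖))
      (Filter.comap (fun a : EuclideanSpace ℝ (Fin N) => ‖a‖) Filter.atTop)
      Filter.atTop :=
  stmt7_general N p nc c w hw
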